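/- For every x ∈ (0, π/2) and every positive integer n, Σ_{k=2}^{2n} (-1)^{k+1} B(k) x^{2k} < sin x / x - (cos x + 2)/3 < Σ_{k=2}^{2n+1} (-1)^{k+1} B(k) x^{2k}. -/

import Mathlib

/-!
The difference of the Taylor series of `sin x / x` and `cos x / 3` is
`∑ (-1)^(k+1) B(k) x^(2k)`, whose terms for `k = 0, 1` are `2/3` and `0`. Since
`4 B(k+1) < B(k)`, for `0 < x < 2` the terms `B(k) x^(2k)`, `k ≥ 2`, decrease strictly, so the
remaining alternating series is bracketed strictly by its consecutive partial sums.
-/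

open Real Finset

/-- The coefficient `B(k) = (2/3)·(k-1)/(2k+1)!`. -/
noncomputable def wchB (k : ℕ) : ℝ :=
  (2 / 3) * ((k : ℝ) - 1) / (Nat.factorial (2 * k + 1) : ℝ)

open Filter Topology

section AlternatingSeries

variable {E : Type*} [Ring E] [PartialOrder E] [IsOrderedRing E]
  [TopologicalSpace E] [OrderClosedTopology E] {l : E} {f : ℕ → E}

theorem StrictAnti.alternating_series_lt_tendsto
    (hfl : Tendsto (fun n ↦ ∑ i ∈ range n, (-1) ^ i * f i) atTop (𝓝 l))
    (hfa : StrictAnti f) (k : ℕ) : ∑ i ∈ range (2 * k), (-1) ^ i * f i < l := by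
  calc ∑ i ∈ range (2 * k), (-1) ^ i * f i
      < ∑ i ∈ range (2 * k), (-1) ^ i * f i + (f (2 * k) - f (2 * k + 1)) :=
        lt_add_of_pos_right _ (sub_pos.2 (hfa (Nat.lt_succ_self _)))
    _ = ∑ i ∈ range (2 * (k + 1)), (-1) ^ i * f i := by
        rw [show 2 * (k + 1) = 2 * k + 1 + 1 by ring, sum_range_succ, sum_range_succ,
          pow_succ, (even_two_mul k).neg_one_pow]
        noncomm_ring
    _ ≤ l := hfa.antitone.alternating_series_le_tendsto hfl (k + 1)

theorem StrictAnti.tendsto_lt_alternating_series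
    (hfl : Tendsto (fun n ↦ ∑ i ∈ range n, (-1) ^ i * f i) atTop (𝓝 l))
    (hfa : StrictAnti f) (k : ℕ) : l < ∑ i ∈ range (2 * k + 1), (-1) ^ i * f i := by
  calc l ≤ ∑ i ∈ range (2 * (k + 1) + 1), (-1) ^ i * f i :=
        hfa.antitone.tendsto_le_alternating_series hfl (k + 1)
    _ = ∑ i ∈ range (2 * k + 1), (-1) ^ i * f i - (f (2 * k + 1) - f (2 * k + 2)) := by
        rw [show 2 * (k + 1) + 1 = 2 * k + 1 + 1 + 1 by ring, sum_range_succ, sum_range_succ]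
        simp only [pow_succ, (even_two_mul k).neg_one_pow]
        noncomm_ring
    _ < ∑ i ∈ range (2 * k + 1), (-1) ^ i * f i :=
        sub_lt_self _ (sub_pos.2 (hfa (Nat.lt_succ_self _)))

end AlternatingSeries

theorem sum_Icc_two_neg_one_pow_succ_mul_eq {R : Type*} [CommRing R] (b : ℕ → R) (m : ℕ) :
    ∑ k ∈ Icc 2 (m + 1), (-1 : R) ^ (k + 1) * b k = -∑ i ∈ range m, (-1 : R) ^ i * b (i + 2) := by
  rw [← Ico_add_one_right_eq_Icc, sum_Ico_eq_sum_range, show m + 1 + 1 - 2 = m by omega,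
    ← sum_neg_distrib]
  refine sum_congr rfl fun i _ ↦ ?_
  rw [add_comm 2 i, pow_succ, pow_add]
  ring

theorem wchB_pos {k : ℕ} (hk : 2 ≤ k) : 0 < wchB k := by
  have hk' : (0 : ℝ) < k - 1 := by
    have : (2 : ℝ) ≤ k := by exact_mod_cast hk
    linarith
  unfold wchB
  positivity

theorem wchB_succ_mul_four_lt {k : ℕ} (hk : 2 ≤ k) : wchB (k + 1) * 4 < wchB k := by
  have hk' : (2 : ℝ) ≤ k := by exact_mod_cast hk
  have hfac : ((2 * (k + 1) + 1).factorial : ℝ)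
      = (2 * k + 2) * (2 * k + 3) * (2 * k + 1).factorial := by
    rw [show 2 * (k + 1) + 1 = 2 * k + 1 + 1 + 1 by ring, Nat.factorial_succ, Nat.factorial_succ]
    push_cast
    ring
  have hpos : (0 : ℝ) < (2 * k + 1).factorial := by positivity
  rw [wchB, wchB, hfac, div_mul_eq_mul_div, div_lt_div_iff₀ (by positivity) hpos]
  push_cast
  have hnum : 2 / 3 * ((k : ℝ) + 1 - 1) * 4 < 2 / 3 * ((k : ℝ) - 1) * ((2 * k + 2) * (2 * k + 3)) := by
    nlinarith [mul_nonneg (sub_nonneg.2 hk') (sub_nonneg.2 hk')]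
  nlinarith

theorem strictAnti_wchB_mul_pow {x : ℝ} (hx0 : x ≠ 0) (hx : x ^ 2 ≤ 4) :
    StrictAnti fun i ↦ wchB (i + 2) * x ^ (2 * (i + 2)) := by
  refine strictAnti_nat_of_succ_lt fun i ↦ ?_
  have hxpow : 0 < x ^ (2 * (i + 2)) := by rw [pow_mul]; exact pow_pos (by positivity) _
  calc wchB (i + 1 + 2) * x ^ (2 * (i + 1 + 2))
      = wchB (i + 2 + 1) * x ^ 2 * x ^ (2 * (i + 2)) := by ring_nf
    _ ≤ wchB (i + 2 + 1) * 4 * x ^ (2 * (i + 2)) := by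
        gcongr
        exact (wchB_pos (by omega)).le
    _ < wchB (i + 2) * x ^ (2 * (i + 2)) := by
        gcongr
        exact wchB_succ_mul_four_lt (by omega)

theorem hasSum_wchB {x : ℝ} (hx : x ≠ 0) :
    HasSum (fun k ↦ (-1 : ℝ) ^ (k + 1) * wchB k * x ^ (2 * k)) (sin x / x - cos x / 3) := by
  refine (((hasSum_sin x).div_const x).sub ((hasSum_cos x).div_const 3)).congr_fun fun k ↦ ?_
  rw [wchB, Nat.factorial_succ, pow_succ]
  push_cast
  field_simp
  ring

theorem hasSum_alternating_wchB_mul_pow {x : ℝ} (hx : x ≠ 0) :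
    HasSum (fun i ↦ (-1 : ℝ) ^ i * (wchB (i + 2) * x ^ (2 * (i + 2))))
      ((cos x + 2) / 3 - sin x / x) := by
  have h := (hasSum_nat_add_iff' 2).2 (hasSum_wchB hx)
  have h01 : ∑ k ∈ range 2, (-1 : ℝ) ^ (k + 1) * wchB k * x ^ (2 * k) = 2 / 3 := by
    norm_num [sum_range_succ, wchB]
  rw [h01] at h
  rw [show (cos x + 2) / 3 - sin x / x = -(sin x / x - cos x / 3 - 2 / 3) by ring]
  exact h.neg.congr_fun fun i ↦ by ring

theorem sinx_div_x_sub_cos_bounds :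
    ∀ x ∈ Set.Ioo (0 : ℝ) (π / 2), ∀ n : ℕ, 1 ≤ n →
      (∑ k ∈ Finset.Icc 2 (2 * n), (-1 : ℝ) ^ (k + 1) * wchB k * x ^ (2 * k))
          < Real.sin x / x - (Real.cos x + 2) / 3 ∧
      Real.sin x / x - (Real.cos x + 2) / 3
          < ∑ k ∈ Finset.Icc 2 (2 * n + 1), (-1 : ℝ) ^ (k + 1) * wchB k * x ^ (2 * k) := by
  rintro x ⟨hx0, hxpi⟩ n hn
  obtain ⟨m, rfl⟩ : ∃ m, n = m + 1 := ⟨n - 1, by omega⟩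
  have hx2 : x ^ 2 ≤ 4 := by nlinarith [pi_lt_d2]
  have hanti := strictAnti_wchB_mul_pow hx0.ne' hx2
  have hlim := (hasSum_alternating_wchB_mul_pow hx0.ne').tendsto_sum_nat
  have hlower := hanti.tendsto_lt_alternating_series hlim m
  have hupper := hanti.alternating_series_lt_tendsto hlim (m + 1)
  simp_rw [mul_assoc _ (wchB _)]
  rw [show 2 * (m + 1) = 2 * m + 1 + 1 by ring] at hupper ⊢
  rw [sum_Icc_two_neg_one_pow_succ_mul_eq _ (2 * m + 1 + 1),
    sum_Icc_two_neg_one_pow_succ_mul_eq _ (2 * m + 1)]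
  exact ⟨by linarith, by linarith⟩
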